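/- In the abstract bundle semantics, for every (B, who) ∈ ⟦C⟧ and every role ρ, the sequence of directed terms along the strand who(ρ) in B is exactly the projection of the corresponding maximal trace of C onto ρ: a transmission +op⟨M̃⟩ for each interaction in the trace with sender ρ, a reception −op⟨M̃⟩ for each interaction with receiver ρ, in trace order, followed by the terminal event e^ρ. -/

import Mathlib

/-- Choreography mini-language: `C ::= Σᵢ ρ1 → ρ2 : opᵢ⟨M̃ᵢ⟩. Cᵢ | 0`.
A `comm ρ1 ρ2 bs` is a finite nondeterministic sum of interactions from role
`ρ1` to role `ρ2`, each branch carrying an operation label, a message tuple,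
and a continuation. -/
inductive Chor (R O M : Type) : Type where
  | zero : Chor R O M
  | comm : R → R → List (O × List M × Chor R O M) → Chor R O M

/-- Interaction labels `μ = (ρ1, ρ2, op, M̃)`. -/
abbrev CLabel (R O M : Type) := R × R × O × List M

/-- LTS rule C-Com: a branch is selected nondeterministically. -/
inductive CStep {R O M : Type} : Chor R O M → CLabel R O M → Chor R O M → Prop where
  | comm {ρ1 ρ2 : R} {bs : List (O × List M × Chor R O M)} {op : O}
      {ms : List M} {c : Chor R O M} (h : (op, ms, c) ∈ bs) :
      CStep (Chor.comm ρ1 ρ2 bs) (ρ1, ρ2, op, ms) c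

/-- Maximal LTS traces: sequences of transitions ending at `0`. -/
inductive MaxTrace {R O M : Type} : Chor R O M → List (CLabel R O M) → Prop where
  | nil : MaxTrace Chor.zero []
  | cons {C C' : Chor R O M} {μ : CLabel R O M} {tr : List (CLabel R O M)} :
      CStep C μ C' → MaxTrace C' tr → MaxTrace C (μ :: tr)

/-- Nodes of abstract bundles: `Sum.inl (i, true)` / `Sum.inl (i, false)` are
the transmission / reception nodes of the `i`-th interaction, and `Sum.inr ρ`
is the terminal fresh event `e^ρ` of role `ρ`. -/
abbrev ANode (R : Type) := (ℕ × Bool) ⊕ R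

/-- Abstract messages: an interaction message `op⟨M̃⟩` or a terminal event `e^ρ`. -/
abbrev AMsg (R O M : Type) := (O × List M) ⊕ R

/-- Abstract bundle environments `(B, who)`: a counter `k` of interactions so
far, a node set, strand edges `⇒_B`, transmission edges `→_B`, the message of
each node, and the map `who` giving the first node of each role's strand. -/
structure AEnv (R O M : Type) where
  k : ℕ
  nodes : Set (ANode R)
  edgeS : ANode R → ANode R → Prop
  edgeM : ANode R → ANode R → Prop
  msg : ANode R → Option (AMsg R O M)
  who : R → ANode R

variable {R O M : Type}

/-- The prefixing operation `(B, who)[μ]`: a fresh transmission node is added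
to the front of the sender's strand, a fresh matching reception node to the
front of the receiver's strand, joined by a transmission edge, and `who` is
updated accordingly. -/
def prefixApply [DecidableEq R] (E : AEnv R O M) (μ : CLabel R O M) : AEnv R O M :=
  let n1 : ANode R := Sum.inl (E.k, true)
  let n2 : ANode R := Sum.inl (E.k, false)
  { k := E.k + 1
    nodes := insert n1 (insert n2 E.nodes)
    edgeS := fun a b =>
      E.edgeS a b ∨ (a = n1 ∧ b = E.who μ.1) ∨ (a = n2 ∧ b = E.who μ.2.1)
    edgeM := fun a b => E.edgeM a b ∨ (a = n1 ∧ b = n2)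
    msg := fun n => if n = n1 ∨ n = n2 then some (Sum.inl (μ.2.2.1, μ.2.2.2))
      else E.msg n
    who := fun ρ => if ρ = μ.1 then n1 else if ρ = μ.2.1 then n2 else E.who ρ }

/-- The bundle environment for `0`: one fresh terminal event `e^ρ` per role. -/
def zeroEnv : AEnv R O M where
  k := 0
  nodes := {n | ∃ ρ : R, n = Sum.inr ρ}
  edgeS := fun _ _ => False
  edgeM := fun _ _ => False
  msg := fun n => match n with
    | Sum.inr ρ => some (Sum.inr ρ)
    | Sum.inl _ => none
  who := fun ρ => Sum.inr ρ

mutual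
/-- The abstract bundle semantics `⟦C⟧` (rules ABS-Zero and ABS-Com). -/
def absSem [DecidableEq R] : Chor R O M → Set (AEnv R O M)
  | Chor.zero => {zeroEnv}
  | Chor.comm ρ1 ρ2 bs => absSemList ρ1 ρ2 bs

/-- Semantics of a sum of branches: the union over the branches of the
prefixed bundles of each continuation. -/
def absSemList [DecidableEq R] (ρ1 ρ2 : R) :
    List (O × List M × Chor R O M) → Set (AEnv R O M)
  | [] => ∅
  | (op, ms, c) :: rest =>
      (fun E => prefixApply E (ρ1, ρ2, op, ms)) '' absSem c ∪
        absSemList ρ1 ρ2 rest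
end

/-- Well-formed choreographies: every sum `Σᵢ` ranges over a non-empty set of
branches (as in the grammar, a sum has at least one summand). -/
inductive NoEmptySum {R O M : Type} : Chor R O M → Prop where
  | zero : NoEmptySum Chor.zero
  | comm {ρ1 ρ2 : R} {bs : List (O × List M × Chor R O M)} (hne : bs ≠ [])
      (hrec : ∀ b ∈ bs, NoEmptySum b.2.2) : NoEmptySum (Chor.comm ρ1 ρ2 bs)

/-- Well-formedness: in every interaction the sender and receiver differ. -/
inductive DistinctRoles {R O M : Type} : Chor R O M → Prop where
  | zero : DistinctRoles Chor.zero
  | comm {ρ1 ρ2 : R} {bs : List (O × List M × Chor R O M)} (hne : ρ1 ≠ ρ2)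
      (hrec : ∀ b ∈ bs, DistinctRoles b.2.2) :
      DistinctRoles (Chor.comm ρ1 ρ2 bs)

open Classical

/-- The sequence of nodes obtained by following strand-successor edges,
starting from a given node, for the given number of steps. -/
noncomputable def follow (edgeS : ANode R → ANode R → Prop) :
    ℕ → ANode R → List (ANode R)
  | 0, n => [n]
  | k + 1, n =>
      n :: (if h : ∃ m, edgeS n m then follow edgeS k (Classical.choose h)
            else [])

/-- The directed term of a node: its direction (`true` = transmission) and
its message. -/
def dterm (E : AEnv R O M) (n : ANode R) : Bool × Option (AMsg R O M) :=
  (match n with | Sum.inl (_, b) => b | Sum.inr _ => true, E.msg n)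

/-- The projection of a maximal trace onto a role `ρ`: a transmission
`+op⟨M̃⟩` for each interaction with sender `ρ` and a reception `−op⟨M̃⟩` for
each interaction with receiver `ρ`, in trace order. -/
def projTrace [DecidableEq R] (ρ : R) :
    List (CLabel R O M) → List (Bool × AMsg R O M)
  | [] => []
  | (ρ1, ρ2, op, ms) :: tr =>
      (if ρ = ρ1 then [(true, Sum.inl (op, ms))] else []) ++
      (if ρ = ρ2 then [(false, Sum.inl (op, ms))] else []) ++
      projTrace ρ tr

/-!
Every `E ∈ ⟦C⟧` is the bundle `traceEnv tr` obtained by prefixing the labels of a maximal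
trace `tr` of `C` onto `zeroEnv`. Prefixing allocates the nodes `(E.k, ±)`, while every edge
and every `who` pointer of `E` only involves nodes numbered below `E.k`. Hence prefixing leaves
each existing strand, messages included, untouched and only puts one fresh node in front of the
sender's and the receiver's strands; as the two roles differ, each role gains exactly the
entries the projection adds.
-/

def traceEnv [DecidableEq R] : List (CLabel R O M) → AEnv R O M
  | [] => zeroEnv
  | μ :: tr => prefixApply (traceEnv tr) μ

lemma exists_mem_of_mem_absSemList [DecidableEq R] {ρ1 ρ2 : R}
    {bs : List (O × List M × Chor R O M)} {E : AEnv R O M}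
    (hE : E ∈ absSemList ρ1 ρ2 bs) :
    ∃ op ms c, (op, ms, c) ∈ bs ∧
      ∃ E' ∈ absSem c, E = prefixApply E' (ρ1, ρ2, op, ms) := by
  induction bs with
  | nil => simp [absSemList] at hE
  | cons b rest ih =>
    obtain ⟨op, ms, c⟩ := b
    rcases hE with ⟨E', hE', rfl⟩ | hE
    · exact ⟨op, ms, c, List.mem_cons_self, E', hE', rfl⟩
    · obtain ⟨op', ms', c', hmem, E', hE', rfl⟩ := ih hE
      exact ⟨op', ms', c', List.mem_cons_of_mem _ hmem, E', hE', rfl⟩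

theorem exists_maxTrace_of_mem_absSem [DecidableEq R] (C : Chor R O M) {E : AEnv R O M}
    (hE : E ∈ absSem C) : ∃ tr, MaxTrace C tr ∧ E = traceEnv tr :=
  match C with
  | Chor.zero => ⟨[], MaxTrace.nil, by simpa [absSem, traceEnv] using hE⟩
  | Chor.comm ρ1 ρ2 bs => by
      obtain ⟨op, ms, c, hmem, E', hE', rfl⟩ := exists_mem_of_mem_absSemList hE
      obtain ⟨tr, htr, rfl⟩ := exists_maxTrace_of_mem_absSem c hE'
      exact ⟨_, MaxTrace.cons (CStep.comm hmem) htr, rfl⟩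
termination_by sizeOf C
decreasing_by
  have := List.sizeOf_lt_of_mem hmem
  simp only [Chor.comm.sizeOf_spec, Prod.mk.sizeOf_spec] at *
  omega

lemma MaxTrace.fst_ne_snd {C : Chor R O M} {tr : List (CLabel R O M)} (htr : MaxTrace C tr)
    (hd : DistinctRoles C) : ∀ μ ∈ tr, μ.1 ≠ μ.2.1 := by
  induction htr with
  | nil => simp
  | cons hs _ ih =>
    obtain ⟨hmem⟩ := hs
    cases hd with | comm hne hrec =>
    exact List.forall_mem_cons.2 ⟨hne, ih (hrec _ hmem)⟩

section Follow

variable {e e' : ANode R → ANode R → Prop} {p : ANode R → Prop}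

lemma follow_congr (hclosed : ∀ a b, p a → e a b → p b) (heq : ∀ a, p a → e' a = e a) :
    ∀ (l : ℕ) {n : ANode R}, p n → follow e' l n = follow e l n
  | 0, _, _ => rfl
  | l + 1, n, hn => by
    simp only [follow, heq n hn]
    split_ifs with h
    · rw [follow_congr hclosed heq l (hclosed n _ hn (Classical.choose_spec h))]
    · rfl

lemma forall_mem_follow (hclosed : ∀ a b, p a → e a b → p b) :
    ∀ (l : ℕ) {n : ANode R}, p n → ∀ m ∈ follow e l n, p m
  | 0, n, hn => by simpa [follow] using hn
  | l + 1, n, hn => by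
    simp only [follow, List.forall_mem_cons]
    refine ⟨hn, ?_⟩
    split_ifs with h
    · exact forall_mem_follow hclosed l (hclosed n _ hn (Classical.choose_spec h))
    · simp

lemma follow_succ_of_forall_iff {n m : ANode R} (h : ∀ b, e n b ↔ b = m) (l : ℕ) :
    follow e (l + 1) n = n :: follow e l m := by
  have hex : ∃ b, e n b := ⟨m, (h m).2 rfl⟩
  rw [follow, dif_pos hex, (h _).1 (Classical.choose_spec hex)]

end Follow

def IsOld (k : ℕ) : ANode R → Prop
  | Sum.inl (i, _) => i < k
  | Sum.inr _ => True

lemma IsOld.mono {k k' : ℕ} {n : ANode R} (h : IsOld k n) (hk : k ≤ k') : IsOld k' n := by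
  rcases n with ⟨i, b⟩ | ρ
  · exact Nat.lt_of_lt_of_le h hk
  · trivial

lemma not_isOld_inl_self (k : ℕ) (b : Bool) : ¬ IsOld (R := R) k (Sum.inl (k, b)) :=
  lt_irrefl k

structure AEnv.WellScoped (E : AEnv R O M) : Prop where
  isOld_of_edgeS : ∀ a b, E.edgeS a b → IsOld E.k a ∧ IsOld E.k b
  isOld_who : ∀ ρ, IsOld E.k (E.who ρ)

lemma zeroEnv_wellScoped : (zeroEnv : AEnv R O M).WellScoped where
  isOld_of_edgeS _ _ h := h.elim
  isOld_who _ := trivial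

section PrefixApply

variable [DecidableEq R] {E : AEnv R O M} {n : ANode R}

lemma prefixApply_edgeS_of_isOld (μ : CLabel R O M) (hn : IsOld E.k n) :
    (prefixApply E μ).edgeS n = E.edgeS n := by
  funext b
  refine propext (or_iff_left_of_imp ?_)
  rintro (⟨rfl, -⟩ | ⟨rfl, -⟩) <;> exact absurd hn (not_isOld_inl_self _ _)

lemma prefixApply_dterm_of_isOld (μ : CLabel R O M) (hn : IsOld E.k n) :
    dterm (prefixApply E μ) n = dterm E n := by
  have h1 : n ≠ Sum.inl (E.k, true) := by rintro rfl; exact not_isOld_inl_self _ _ hn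
  have h2 : n ≠ Sum.inl (E.k, false) := by rintro rfl; exact not_isOld_inl_self _ _ hn
  simp [dterm, prefixApply, h1, h2]

lemma prefixApply_who_fst (μ : CLabel R O M) :
    (prefixApply E μ).who μ.1 = Sum.inl (E.k, true) := by
  simp [prefixApply]

lemma prefixApply_who_snd {μ : CLabel R O M} (h : μ.2.1 ≠ μ.1) :
    (prefixApply E μ).who μ.2.1 = Sum.inl (E.k, false) := by
  simp [prefixApply, h]

lemma prefixApply_who_of_ne {μ : CLabel R O M} {ρ : R} (h1 : ρ ≠ μ.1) (h2 : ρ ≠ μ.2.1) :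
    (prefixApply E μ).who ρ = E.who ρ := by
  simp [prefixApply, h1, h2]

lemma prefixApply_dterm_fresh (μ : CLabel R O M) (b : Bool) :
    dterm (prefixApply E μ) (Sum.inl (E.k, b)) = (b, some (Sum.inl (μ.2.2.1, μ.2.2.2))) := by
  cases b <;> simp [dterm, prefixApply]

namespace AEnv.WellScoped

lemma prefixApply (hE : E.WellScoped) (μ : CLabel R O M) : (prefixApply E μ).WellScoped where
  isOld_of_edgeS a b h := by
    have hk : E.k ≤ E.k + 1 := Nat.le_succ _
    rcases h with h | ⟨rfl, rfl⟩ | ⟨rfl, rfl⟩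
    · exact ⟨(hE.isOld_of_edgeS a b h).1.mono hk, (hE.isOld_of_edgeS a b h).2.mono hk⟩
    · exact ⟨Nat.lt_succ_self _, (hE.isOld_who _).mono hk⟩
    · exact ⟨Nat.lt_succ_self _, (hE.isOld_who _).mono hk⟩
  isOld_who ρ := by
    simp only [_root_.prefixApply]
    split_ifs
    · exact Nat.lt_succ_self _
    · exact Nat.lt_succ_self _
    · exact (hE.isOld_who ρ).mono (Nat.le_succ _)

lemma map_dterm_follow_prefixApply (hE : E.WellScoped) (μ : CLabel R O M) (l : ℕ)
    (hn : IsOld E.k n) :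
    (follow (_root_.prefixApply E μ).edgeS l n).map (dterm (_root_.prefixApply E μ)) =
      (follow E.edgeS l n).map (dterm E) := by
  have hclosed : ∀ a b, IsOld E.k a → E.edgeS a b → IsOld E.k b :=
    fun a b _ h => (hE.isOld_of_edgeS a b h).2
  rw [follow_congr hclosed (fun a ha => prefixApply_edgeS_of_isOld μ ha) l hn]
  exact List.map_congr_left fun m hm =>
    prefixApply_dterm_of_isOld μ (forall_mem_follow hclosed l hn m hm)

/-- The fresh node `(E.k, b)` has no edge in `E`, so its only successor is the one added. -/
lemma follow_prefixApply_fresh (hE : E.WellScoped) (μ : CLabel R O M) (b : Bool) (l : ℕ) :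
    follow (_root_.prefixApply E μ).edgeS (l + 1) (Sum.inl (E.k, b)) =
      Sum.inl (E.k, b) :: follow (_root_.prefixApply E μ).edgeS l
        (E.who (bif b then μ.1 else μ.2.1)) := by
  refine follow_succ_of_forall_iff (fun m => ?_) l
  have hno : ¬ E.edgeS (Sum.inl (E.k, b)) m :=
    fun h => not_isOld_inl_self _ _ (hE.isOld_of_edgeS _ _ h).1
  cases b <;> simp [_root_.prefixApply, hno]

end AEnv.WellScoped

end PrefixApply

section Projection

variable [DecidableEq R] {ρ ρ1 ρ2 : R} {op : O} {ms : List M} {tr : List (CLabel R O M)}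

lemma projTrace_cons_sender (h : ρ1 ≠ ρ2) :
    projTrace ρ1 ((ρ1, ρ2, op, ms) :: tr) = (true, Sum.inl (op, ms)) :: projTrace ρ1 tr := by
  simp [projTrace, h]

lemma projTrace_cons_receiver (h : ρ2 ≠ ρ1) :
    projTrace ρ2 ((ρ1, ρ2, op, ms) :: tr) = (false, Sum.inl (op, ms)) :: projTrace ρ2 tr := by
  simp [projTrace, h]

lemma projTrace_cons_of_ne (h1 : ρ ≠ ρ1) (h2 : ρ ≠ ρ2) :
    projTrace ρ ((ρ1, ρ2, op, ms) :: tr) = projTrace ρ tr := by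
  simp [projTrace, h1, h2]

end Projection

lemma wellScoped_traceEnv [DecidableEq R] :
    ∀ tr : List (CLabel R O M), (traceEnv tr).WellScoped
  | [] => zeroEnv_wellScoped
  | _ :: tr => (wellScoped_traceEnv tr).prefixApply _

theorem map_dterm_follow_traceEnv [DecidableEq R] :
    ∀ {tr : List (CLabel R O M)}, (∀ μ ∈ tr, μ.1 ≠ μ.2.1) → ∀ ρ : R,
      (follow (traceEnv tr).edgeS (projTrace ρ tr).length ((traceEnv tr).who ρ)).map
          (dterm (traceEnv tr)) =
        (projTrace ρ tr).map (fun p => (p.1, some p.2)) ++ [(true, some (Sum.inr ρ))]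
  | [], _, ρ => by simp [traceEnv, projTrace, follow, dterm, zeroEnv]
  | (ρ1, ρ2, op, ms) :: tr, hne, ρ => by
    have ih := map_dterm_follow_traceEnv (List.forall_mem_cons.1 hne).2 ρ
    have h12 : ρ1 ≠ ρ2 := (List.forall_mem_cons.1 hne).1
    have hE := wellScoped_traceEnv tr
    simp only [traceEnv]
    by_cases h1 : ρ = ρ1
    · subst h1
      rw [projTrace_cons_sender h12, List.length_cons, prefixApply_who_fst,
        hE.follow_prefixApply_fresh, List.map_cons, cond_true,
        hE.map_dterm_follow_prefixApply _ _ (hE.isOld_who _), ih, prefixApply_dterm_fresh]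
      rfl
    by_cases h2 : ρ = ρ2
    · subst h2
      rw [projTrace_cons_receiver h1, List.length_cons, prefixApply_who_snd h1,
        hE.follow_prefixApply_fresh, List.map_cons, cond_false,
        hE.map_dterm_follow_prefixApply _ _ (hE.isOld_who _), ih, prefixApply_dterm_fresh]
      rfl
    rw [projTrace_cons_of_ne h1 h2, prefixApply_who_of_ne h1 h2,
      hE.map_dterm_follow_prefixApply _ _ (hE.isOld_who _), ih]

/-- For every `(B, who) ∈ ⟦C⟧` and every role `ρ`, the sequence of directed
terms along the strand `who ρ` in `B` is exactly the projection of the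
corresponding maximal trace of `C` onto `ρ`, followed by the terminal event
`e^ρ`. -/
theorem absSem_strand_is_projection [DecidableEq R] (C : Chor R O M)
    (hC : NoEmptySum C) (hd : DistinctRoles C)
    (E : AEnv R O M) (hE : E ∈ absSem C) :
    ∃ tr, MaxTrace C tr ∧ ∀ ρ : R,
      (follow E.edgeS (projTrace ρ tr).length (E.who ρ)).map (dterm E) =
        (projTrace (R := R) (O := O) (M := M) ρ tr).map
            (fun p => (p.1, some p.2)) ++
          [(true, some (Sum.inr ρ))] := by
  obtain ⟨tr, htr, rfl⟩ := exists_maxTrace_of_mem_absSem C hE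
  exact ⟨tr, htr, map_dterm_follow_traceEnv (htr.fst_ne_snd hd)⟩
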